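/- arXiv:math/0306099 — 10 statements merged into one kernel-verified Lean document; each statement's English description precedes it below -/
import Mathlib

section
/- Let G be a group and let H be a subnormal subgroup of G of finite index. Then the set of prime divisors of the index [G : H_G] of the core of H equals the set of prime divisors of [G : H], i.e. P([G : H_G]) = P([G : H]). -/
/-!
Let `N = H_G` and `p` a prime not dividing `[G : H]`. Walking down a subnormal chain, every
`p`-subgroup of `G / N` lies in `H / N`, because at each step a `p`-element maps to an element of
order prime to `p` in a quotient of order prime to `p`, i.e. to `1`. If `p` divided `|G / N|`,
Cauchy would give an element `gN` of order `p`; then every conjugate of `g` lies in `H`, so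
`g ∈ N`, which is absurd. Hence `P([G : H_G]) ⊆ P([G : H])`; the other inclusion is `H_G ≤ H`.
-/

/-- A subgroup `H` of a group `G` is subnormal if there is a finite chain
`H = H_0 ≤ H_1 ≤ ⋯ ≤ H_n = G` in which each `H_{i-1}` is normal in `H_i`. -/
def IsSubnormal {G : Type*} [Group G] (H : Subgroup G) : Prop :=
  ∃ (n : ℕ) (f : Fin (n + 1) → Subgroup G),
    f 0 = H ∧ f (Fin.last n) = ⊤ ∧
    ∀ i : Fin n, f i.castSucc ≤ f i.succ ∧
      ∀ x ∈ f i.succ, ∀ h ∈ f i.castSucc, x * h * x⁻¹ ∈ f i.castSucc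

theorem IsSubnormal.subgroup_isSubnormal {G : Type*} [Group G] {H : Subgroup G}
    (hH : IsSubnormal H) : H.IsSubnormal := by
  obtain ⟨n, f, rfl, hlast, hchain⟩ := hH
  refine Fin.reverseInduction (motive := fun i => (f i).IsSubnormal) (hlast ▸ .top)
    (fun i hi => ?_) 0
  obtain ⟨hle, hconj⟩ := hchain i
  exact .step _ _ hle hi ⟨fun h hh k => hconj k k.2 h hh⟩

namespace Subgroup

variable {G : Type*} [Group G] {p : ℕ} [Fact p.Prime]

theorem le_of_isPGroup_of_not_dvd_index {N P : Subgroup G} [N.Normal] (hP : IsPGroup p P)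
    (hN : ¬ p ∣ N.index) : P ≤ N := by
  intro g hg
  obtain ⟨k, hk⟩ := hP ⟨g, hg⟩
  have hcop : (p ^ k).Coprime N.index :=
    ((Nat.Prime.coprime_iff_not_dvd Fact.out).2 hN).pow_left k
  have hpow : orderOf (g : G ⧸ N) ∣ p ^ k := orderOf_dvd_of_pow_eq_one <| by
    rw [← QuotientGroup.mk_pow, show g ^ p ^ k = 1 from congrArg Subtype.val hk,
      QuotientGroup.mk_one]
  have hcard : orderOf (g : G ⧸ N) ∣ N.index := N.index_eq_card ▸ _root_.orderOf_dvd_natCard _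
  rw [← QuotientGroup.eq_one_iff, ← orderOf_eq_one_iff]
  exact Nat.eq_one_of_dvd_coprimes hcop hpow hcard

theorem IsSubnormal.le_of_isPGroup_of_not_dvd_index {H P : Subgroup G} (hH : H.IsSubnormal)
    (hP : IsPGroup p P) (hp : ¬ p ∣ H.index) : P ≤ H := by
  induction hH with
  | top => exact le_top
  | step H K hle _ hN ih =>
    have hPK : P ≤ K := ih fun hK => hp (hK.trans (index_dvd_of_le hle))
    have hPH : P.subgroupOf K ≤ H.subgroupOf K :=
      Subgroup.le_of_isPGroup_of_not_dvd_index hP.comap_subtype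
        fun hHK => hp (hHK.trans (relIndex_dvd_index_of_le hle))
    exact fun g hg => hPH (x := ⟨g, hPK hg⟩) hg

theorem IsSubnormal.dvd_index_of_dvd_index_normalCore {H : Subgroup G} (hH : H.IsSubnormal)
    (hp : p ∣ H.normalCore.index) : p ∣ H.index := by
  by_contra hpH
  have : H.FiniteIndex := ⟨fun h0 => hpH (h0 ▸ dvd_zero p)⟩
  set N := H.normalCore
  set S := H.map (QuotientGroup.mk' N)
  have hS : S.IsSubnormal := hH.quotient
  have hker : (QuotientGroup.mk' N).ker ≤ H := (QuotientGroup.ker_mk' N).trans_le H.normalCore_le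
  have hSH : S.index = H.index := index_map_eq _ (QuotientGroup.mk'_surjective N) hker
  obtain ⟨x, hx⟩ := exists_prime_orderOf_dvd_card' (G := G ⧸ N) p (N.index_eq_card ▸ hp)
  obtain ⟨g, rfl⟩ := QuotientGroup.mk_surjective x
  have hgN : g ∈ N := fun b => by
    have hconj : IsPGroup p ((zpowers (g : G ⧸ N)).map (MulAut.conj (b : G ⧸ N)).toMonoidHom) :=
      (IsPGroup.of_card ((Nat.card_zpowers _).trans (hx.trans (pow_one p).symm))).map _
    have hbg : ((b * g * b⁻¹ : G) : G ⧸ N) ∈ S :=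
      hS.le_of_isPGroup_of_not_dvd_index hconj (hSH ▸ hpH) ⟨g, mem_zpowers _, rfl⟩
    exact (comap_map_eq_self hker).le hbg
  rw [(QuotientGroup.eq_one_iff g).2 hgN, orderOf_one] at hx
  exact (Fact.out : p.Prime).one_lt.ne hx

end Subgroup

theorem primeFactors_index_normalCore_of_subnormal_general {G : Type*} [Group G]
    (H : Subgroup G) (hsub : IsSubnormal H) :
    (H.normalCore).index.primeFactors = H.index.primeFactors := by
  have hdvd : H.index ∣ H.normalCore.index := Subgroup.index_dvd_of_le H.normalCore_le
  ext p
  simp only [Nat.mem_primeFactors]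
  constructor
  · rintro ⟨hp, hpN, hN⟩
    have := Fact.mk hp
    exact ⟨hp, hsub.subgroup_isSubnormal.dvd_index_of_dvd_index_normalCore hpN,
      ne_zero_of_dvd_ne_zero hN hdvd⟩
  · rintro ⟨hp, hpH, hH⟩
    have : H.FiniteIndex := ⟨hH⟩
    exact ⟨hp, hpH.trans hdvd, Subgroup.FiniteIndex.index_ne_zero⟩

theorem primeFactors_index_normalCore_of_subnormal {G : Type*} [Group G]
    (H : Subgroup G) (hsub : IsSubnormal H) (hfin : H.index ≠ 0) :
    (H.normalCore).index.primeFactors = H.index.primeFactors :=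
  primeFactors_index_normalCore_of_subnormal_general H hsub
end

section
/- Let G be a finite group and let H be a Hall subgroup of G, i.e. a subgroup with gcd(|H|, [G : H]) = 1. If H is subnormal in G, then H is normal in G. -/
namespace Subgroup

variable {G : Type*} [Group G]

theorem mem_of_coprime_orderOf_index {N : Subgroup G} [N.Normal] {g : G}
    (hg : (orderOf g).Coprime N.index) : g ∈ N := by
  have h_dvd_order : orderOf (g : G ⧸ N) ∣ orderOf g := orderOf_map_dvd (QuotientGroup.mk' N) g
  have h_dvd_index : orderOf (g : G ⧸ N) ∣ N.index := _root_.orderOf_dvd_natCard _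
  rw [← QuotientGroup.eq_one_iff, ← orderOf_eq_one_iff]
  exact Nat.eq_one_of_dvd_coprimes hg h_dvd_order h_dvd_index

theorem mem_of_coprime_orderOf_relIndex {H K : Subgroup G} (hHK : H ≤ K)
    (hK : K ≤ normalizer H) {g : G} (hg : g ∈ K) (hcop : (orderOf g).Coprime (H.relIndex K)) :
    g ∈ H := by
  have : (H.subgroupOf K).Normal := (normal_subgroupOf_iff_le_normalizer hHK).mpr hK
  have hmem : (⟨g, hg⟩ : K) ∈ H.subgroupOf K :=
    mem_of_coprime_orderOf_index (by rwa [orderOf_mk])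
  exact mem_subgroupOf.mp hmem

theorem le_normalizer_of_coprime_card_relIndex {H K L : Subgroup G} [Finite H] (hHK : H ≤ K)
    (hK : K ≤ normalizer H) (hL : L ≤ normalizer K)
    (hcop : (Nat.card H).Coprime (H.relIndex K)) : L ≤ normalizer H := by
  have : Finite (H : Set G) := ‹Finite H›
  intro x hx
  refine mem_normalizer_fintype fun h hh ↦ mem_of_coprime_orderOf_relIndex hHK hK ?_ ?_
  · exact (mem_normalizer_iff.mp (hL hx) h).mp (hHK hh)
  · have horder : orderOf (x * h * x⁻¹) = orderOf h := (MulAut.conj x).orderOf_eq h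
    exact hcop.coprime_dvd_left (horder ▸ H.orderOf_dvd_natCard hh)

theorem IsSubnormal.normal_of_coprime_of_le_normalizer {H K : Subgroup G} [Finite H]
    (hK : K.IsSubnormal) (hHK : H ≤ K) (hKH : K ≤ normalizer H)
    (hcop : (Nat.card H).Coprime H.index) : H.Normal := by
  induction hK with
  | top => exact normalizer_eq_top_iff.mp (top_le_iff.mp hKH)
  | step K L hKL _ hN ih =>
    have hcopK : (Nat.card H).Coprime (H.relIndex K) :=
      hcop.coprime_dvd_right (relIndex_dvd_index_of_le hHK)
    exact ih (hHK.trans hKL) <| le_normalizer_of_coprime_card_relIndex hHK hKH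
      (le_normalizer_of_normal_subgroupOf hKL) hcopK

theorem IsSubnormal.normal_of_coprime_card_index {H : Subgroup G} [Finite H] (hH : H.IsSubnormal)
    (hcop : (Nat.card H).Coprime H.index) : H.Normal :=
  hH.normal_of_coprime_of_le_normalizer le_rfl le_normalizer hcop

end Subgroup

theorem hall_subnormal_normal {G : Type*} [Group G] [Finite G] (H : Subgroup G)
    (hHall : Nat.Coprime (Nat.card H) H.index) (hsub : IsSubnormal H) :
    H.Normal :=
  hsub.subgroup_isSubnormal.normal_of_coprime_card_index hHall
end

section
/- Let G be a group and let H and K be normal subgroups of G of finite index, and let ω be a set of primes. Then both quotient groups G/H and G/K have normal Hall ω-subgroups if and only if the quotient group G/(H ∩ K) has a normal Hall ω-subgroup. -/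
/-- A finite group `F` has a normal Hall `ω`-subgroup: a normal subgroup `S` such that
every prime divisor of `|S|` lies in `ω` and no prime divisor of `[F : S]` lies in `ω`. -/
def HasNormalHallSubgroup (F : Type*) [Group F] (ω : Set ℕ) : Prop :=
  ∃ S : Subgroup F, S.Normal ∧ (∀ p : ℕ, p.Prime → p ∣ Nat.card S → p ∈ ω) ∧
    (∀ p : ℕ, p.Prime → p ∣ S.index → p ∉ ω)

/-- Surjective homomorphisms push forward normal Hall subgroups. -/
lemma HasNormalHallSubgroup.of_surjective {F F' : Type*} [Group F] [Group F']
    (f : F →* F') (hf : Function.Surjective f) {ω : Set ℕ}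
    (h : HasNormalHallSubgroup F ω) : HasNormalHallSubgroup F' ω := by
  obtain ⟨S, hS, hcard, hindex⟩ := h
  refine ⟨S.map f, hS.map f hf, ?_, ?_⟩
  · intro p hp hdvd
    exact hcard p hp (hdvd.trans (Subgroup.card_dvd_of_surjective
      (f.subgroupMap S) (f.subgroupMap_surjective S)))
  · intro p hp hdvd
    exact hindex p hp (hdvd.trans (S.index_map_dvd hf))

/-- Injective homomorphisms pull back normal Hall subgroups. -/
lemma HasNormalHallSubgroup.of_injective {F F' : Type*} [Group F] [Group F']
    (f : F →* F') (hf : Function.Injective f) {ω : Set ℕ}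
    (h : HasNormalHallSubgroup F' ω) : HasNormalHallSubgroup F ω := by
  obtain ⟨S, hS, hcard, hindex⟩ := h
  refine ⟨S.comap f, hS.comap f, ?_, ?_⟩
  · intro p hp hdvd
    exact hcard p hp (hdvd.trans (Subgroup.card_comap_dvd_of_injective S f hf))
  · intro p hp hdvd
    refine hindex p hp (hdvd.trans ?_)
    rw [Subgroup.index_comap]
    exact Subgroup.relIndex_dvd_index_of_normal S f.range

/-- Products of groups with normal Hall subgroups have normal Hall subgroups. -/
lemma HasNormalHallSubgroup.prod {F F' : Type*} [Group F] [Group F'] {ω : Set ℕ}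
    (h : HasNormalHallSubgroup F ω) (h' : HasNormalHallSubgroup F' ω) :
    HasNormalHallSubgroup (F × F') ω := by
  obtain ⟨S, hS, hcard, hindex⟩ := h
  obtain ⟨S', hS', hcard', hindex'⟩ := h'
  refine ⟨S.prod S', Subgroup.prod_normal S S', ?_, ?_⟩
  · intro p hp hdvd
    have : Nat.card (S.prod S') = Nat.card S * Nat.card S' := by
      rw [Nat.card_congr (S.prodEquiv S').toEquiv, Nat.card_prod]
    rw [this] at hdvd
    rcases hp.dvd_mul.mp hdvd with h1 | h1
    · exact hcard p hp h1
    · exact hcard' p hp h1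
  · intro p hp hdvd
    rw [Subgroup.index_prod] at hdvd
    rcases hp.dvd_mul.mp hdvd with h1 | h1
    · exact hindex p hp h1
    · exact hindex' p hp h1

theorem hasNormalHall_quot_inf_iff {G : Type*} [Group G] (H K : Subgroup G)
    [H.Normal] [K.Normal] (hH : H.index ≠ 0) (hK : K.index ≠ 0) (ω : Set ℕ) :
    (HasNormalHallSubgroup (G ⧸ H) ω ∧ HasNormalHallSubgroup (G ⧸ K) ω) ↔
      HasNormalHallSubgroup (G ⧸ (H ⊓ K)) ω := by
  have hle1 : H ⊓ K ≤ H.comap (MonoidHom.id G) := by simpa using inf_le_left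
  have hle2 : H ⊓ K ≤ K.comap (MonoidHom.id G) := by simpa using inf_le_right
  set φ₁ : G ⧸ (H ⊓ K) →* G ⧸ H := QuotientGroup.map (H ⊓ K) H (MonoidHom.id G) hle1
  set φ₂ : G ⧸ (H ⊓ K) →* G ⧸ K := QuotientGroup.map (H ⊓ K) K (MonoidHom.id G) hle2
  have hφ₁ : Function.Surjective φ₁ := by
    intro x
    obtain ⟨g, rfl⟩ := QuotientGroup.mk_surjective x
    exact ⟨QuotientGroup.mk g, rfl⟩
  have hφ₂ : Function.Surjective φ₂ := by
    intro x
    obtain ⟨g, rfl⟩ := QuotientGroup.mk_surjective x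
    exact ⟨QuotientGroup.mk g, rfl⟩
  constructor
  · rintro ⟨h1, h2⟩
    -- pull back along the injective map into the product
    have hinj : Function.Injective (φ₁.prod φ₂) := by
      rw [← MonoidHom.ker_eq_bot_iff]
      rw [eq_bot_iff]
      intro x hx
      obtain ⟨g, rfl⟩ := QuotientGroup.mk_surjective x
      simp only [MonoidHom.mem_ker, MonoidHom.prod_apply, Prod.mk_eq_one] at hx
      obtain ⟨hx1, hx2⟩ := hx
      have hgH : g ∈ H := by
        have : φ₁ (QuotientGroup.mk g) = QuotientGroup.mk g := rfl
        rw [this, QuotientGroup.eq_one_iff] at hx1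
        exact hx1
      have hgK : g ∈ K := by
        have : φ₂ (QuotientGroup.mk g) = QuotientGroup.mk g := rfl
        rw [this, QuotientGroup.eq_one_iff] at hx2
        exact hx2
      show QuotientGroup.mk g ∈ (⊥ : Subgroup (G ⧸ (H ⊓ K)))
      rw [Subgroup.mem_bot, QuotientGroup.eq_one_iff]
      exact ⟨hgH, hgK⟩
    exact HasNormalHallSubgroup.of_injective (φ₁.prod φ₂) hinj (h1.prod h2)
  · intro h
    exact ⟨h.of_surjective φ₁ hφ₁, h.of_surjective φ₂ hφ₂⟩
end

section
/- Let G be a group and let H be a subgroup of G of finite index. If p is a prime dividing [G : H_G] but not dividing [G : H], then the finite quotient group G/H_G does not have a normal Sylow p-subgroup. -/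
theorem no_normal_sylow_of_dvd_core_index {G : Type*} [Group G] (H : Subgroup G)
    (hfin : H.index ≠ 0) (p : ℕ) (hp : p.Prime)
    (hdvd : p ∣ H.normalCore.index) (hndvd : ¬ p ∣ H.index) :
    ¬ ∃ P : Sylow p (G ⧸ H.normalCore), (P : Subgroup (G ⧸ H.normalCore)).Normal := by
  haveI : Fact p.Prime := ⟨hp⟩
  haveI : H.FiniteIndex := ⟨hfin⟩
  haveI : Finite (G ⧸ H.normalCore) := H.normalCore.finite_quotient_of_finiteIndex
  rintro ⟨P, hP⟩
  haveI := Sylow.unique_of_normal P hP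
  set φ := QuotientGroup.mk' H.normalCore with hφ
  set H' : Subgroup (G ⧸ H.normalCore) := H.map φ with hH'
  have hker : φ.ker ≤ H := by
    rw [hφ, QuotientGroup.ker_mk']; exact H.normalCore_le
  have hsurj : Function.Surjective φ := QuotientGroup.mk'_surjective _
  have hidx : H'.index = H.index := Subgroup.index_map_eq _ hsurj hker
  have hcardQ : Nat.card (G ⧸ H.normalCore) ≠ 0 := Nat.card_pos.ne'
  -- take a Sylow p-subgroup S of H'
  obtain ⟨S⟩ : Nonempty (Sylow p H') := inferInstance
  have hSmap : IsPGroup p (S.1.map H'.subtype) := S.isPGroup'.map _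
  obtain ⟨Q, hQ⟩ := hSmap.exists_le_sylow
  have hQP : Q = P := Subsingleton.elim _ _
  rw [hQP] at hQ
  -- cardinalities
  have hcardS : Nat.card (S.1.map H'.subtype) = Nat.card S.1 :=
    (Nat.card_congr (S.1.equivMapOfInjective _ H'.subtype_injective).toEquiv).symm
  have hfact : (Nat.card H').factorization p
      = (Nat.card (G ⧸ H.normalCore)).factorization p := by
    have hmul := H'.index_mul_card
    have h1 : H'.index ≠ 0 := by rw [hidx]; exact hfin
    have h2 : Nat.card H' ≠ 0 := Nat.card_pos.ne'
    rw [← hmul, Nat.factorization_mul h1 h2]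
    have : (H'.index).factorization p = 0 := by
      rw [hidx]
      exact Nat.factorization_eq_zero_of_not_dvd hndvd
    simp [this]
  have hcardP : Nat.card (S.1.map H'.subtype) = Nat.card P := by
    rw [hcardS, S.card_eq_multiplicity, P.card_eq_multiplicity, hfact]
  -- hence P ≤ H'
  have hPH' : (P : Subgroup (G ⧸ H.normalCore)) ≤ H' := by
    have heq : S.1.map H'.subtype = P :=
      Subgroup.eq_of_le_of_card_ge hQ (le_of_eq hcardP.symm)
    rw [← heq]
    exact Subgroup.map_subtype_le _
  -- the preimage of P is normal and contained in H, hence in the normal core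
  have hK : (P : Subgroup (G ⧸ H.normalCore)).comap φ ≤ H := by
    refine le_trans (Subgroup.comap_mono hPH') ?_
    rw [hH', Subgroup.comap_map_eq, sup_of_le_left hker]
  haveI : ((P : Subgroup (G ⧸ H.normalCore)).comap φ).Normal := hP.comap φ
  have hKcore : (P : Subgroup (G ⧸ H.normalCore)).comap φ ≤ H.normalCore :=
    Subgroup.normal_le_normalCore.mpr hK
  have hPbot : (P : Subgroup (G ⧸ H.normalCore)) = ⊥ := by
    have := Subgroup.map_mono (f := φ) hKcore
    rw [Subgroup.map_comap_eq_self_of_surjective hsurj] at this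
    refine le_antisymm (le_trans this ?_) bot_le
    intro x hx
    obtain ⟨y, hy, rfl⟩ := hx
    have : y ∈ φ.ker := by rwa [hφ, QuotientGroup.ker_mk']
    simpa using this
  -- contradiction: p divides the order of P
  have hpdvd : p ∣ Nat.card P := by
    rw [P.card_eq_multiplicity]
    refine dvd_pow_self p ?_
    have h3 : p ∣ Nat.card (G ⧸ H.normalCore) := by
      rwa [Subgroup.index_eq_card] at hdvd
    exact (Nat.Prime.factorization_pos_of_dvd hp hcardQ h3).ne'
  have : Nat.card P = 1 := by
    simp [hPbot]
  rw [this] at hpdvd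
  exact hp.one_lt.ne' (Nat.eq_one_of_dvd_one hpdvd)
end

section
/- Let G be a finite group and let p be a prime dividing |G|. Then G is a solvable group having a normal Sylow p-subgroup if and only if there exists a chain {e} = H_0 ≤ H_1 ≤ ⋯ ≤ H_n = G of subgroups, each H_{i-1} normal in H_i, such that every quotient H_i/H_{i-1} has prime order and, for each 1 ≤ i < n, if |H_i/H_{i-1}| ≠ p then |H_{i+1}/H_i| ≠ p. -/
/-!
The chains in question are the prime-index series in which all factors equal to `p` come first.
Along such a series, solvability and the existence of a normal `p`-subgroup of index prime to `p`
both pass from each term to the next: while the factors are `p` the term itself is a `p`-group,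
and afterwards the subgroup reached stays normal, because a normal `p`-subgroup of `p'`-index is
characteristic. Conversely, if `G` is solvable with normal Sylow subgroup `P ≠ G`, a maximal
subgroup of the abelianisation of `G ⧸ P` pulls back to a normal subgroup `N ⊇ P` of prime index,
which cannot be `p`; the series of `N` given by induction, followed by `G`, is the required chain.
If `P = G`, every factor is `p`.
-/

open Subgroup

theorem Fin.monotone_of_le_of_val_eq_succ {α : Type*} [Preorder α] {n : ℕ} {q : Fin n → α}
    (h : ∀ i j : Fin n, (j : ℕ) = i + 1 → q i ≤ q j) : Monotone q := by
  cases n with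
  | zero => exact fun i => i.elim0
  | succ m => exact Fin.monotone_iff_le_succ.mpr fun i => h _ _ (by simp)

namespace Subgroup

variable {G : Type*} [Group G]

theorem le_normalizer_of_forall_conj_mem {H K : Subgroup G}
    (h : ∀ x ∈ K, ∀ y ∈ H, x * y * x⁻¹ ∈ H) : K ≤ normalizer (H : Set G) := by
  intro x hx
  rw [mem_normalizer_iff]
  refine fun y => ⟨h x hx y, fun hy => ?_⟩
  simpa [mul_assoc] using h x⁻¹ (inv_mem hx) _ hy

theorem normal_of_commutator_le {M : Subgroup G} (h : _root_.commutator G ≤ M) : M.Normal :=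
  commutator_top_left_le_iff.mp ((commutator_mono le_top le_top).trans h)

theorem index_prime_of_isCoatom {M : Subgroup G} (hM : IsCoatom M)
    (h : _root_.commutator G ≤ M) : M.index.Prime := by
  have := normal_of_commutator_le h
  have : IsMulCommutative (G ⧸ M) := Normal.quotient_commutative_iff_commutator_le.mpr h
  have e : Subgroup (G ⧸ M) ≃o Set.Ici M := QuotientGroup.comapMk'OrderIso M
  have : IsSimpleOrder (Subgroup (G ⧸ M)) :=
    e.isSimpleOrder_iff.mpr (Set.isSimpleOrder_Ici_iff_isCoatom.mpr hM)
  have : Nontrivial (G ⧸ M) := Subgroup.nontrivial_iff.mp inferInstance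
  have : IsSimpleGroup (G ⧸ M) := ⟨fun H _ => IsSimpleOrder.eq_bot_or_eq_top H⟩
  rw [index_eq_card]
  exact Group.is_simple_iff_prime_card.mp this

theorem exists_normal_le_index_prime [Finite G] [Group.IsSolvable G] (M : Subgroup G) [M.Normal]
    (hM : M ≠ ⊤) : ∃ N : Subgroup G, N.Normal ∧ M ≤ N ∧ N.index.Prime := by
  have : Nontrivial (G ⧸ M) := QuotientGroup.nontrivial_iff.mpr hM
  obtain ⟨C, hC, hle⟩ := (eq_top_or_exists_le_coatom (_root_.commutator (G ⧸ M))).resolve_left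
    (Group.IsSolvable.commutator_lt_top_of_nontrivial _).ne
  have := normal_of_commutator_le hle
  refine ⟨C.comap (QuotientGroup.mk' M), inferInstance, QuotientGroup.le_comap_mk' M C, ?_⟩
  rw [index_comap_of_surjective C (QuotientGroup.mk'_surjective M)]
  exact index_prime_of_isCoatom hC hle

theorem card_lt_of_one_lt_index [Finite G] {H : Subgroup G} (h : 1 < H.index) :
    Nat.card H < Nat.card G :=
  H.card_mul_index ▸ lt_mul_of_one_lt_right Nat.card_pos h

theorem isSolvable_of_relIndex_prime {H K : Subgroup G} [Group.IsSolvable H] (hHK : H ≤ K)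
    (hK : K ≤ normalizer (H : Set G)) (hprime : (H.relIndex K).Prime) : Group.IsSolvable K := by
  have := (normal_subgroupOf_iff_le_normalizer hHK).mpr hK
  have : Fact (Nat.card (K ⧸ H.subgroupOf K)).Prime :=
    ⟨index_eq_card (H.subgroupOf K) ▸ hprime⟩
  have : IsCyclic (K ⧸ H.subgroupOf K) := isCyclic_of_prime_card rfl
  have : Group.IsSolvable (K ⧸ H.subgroupOf K) := Group.isSolvable_of_comm mul_comm'
  have : Group.IsSolvable (H.subgroupOf K) :=
    Group.isSolvable_of_isSolvable_injective (f := (subgroupOfEquivOfLe hHK).toMonoidHom)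
      (subgroupOfEquivOfLe hHK).injective
  exact (Group.isSolvable_iff_subgroup_quotient (H.subgroupOf K)).mpr
    ⟨inferInstance, inferInstance⟩

end Subgroup

namespace IsPGroup

variable {G : Type*} [Group G] {p : ℕ} [Fact p.Prime]

theorem relIndex_eq_of_prime {H K : Subgroup G} [Finite K] (hK : IsPGroup p K)
    (hprime : (H.relIndex K).Prime) : H.relIndex K = p := by
  obtain ⟨k, hk⟩ := IsPGroup.iff_card.mp hK
  exact (Nat.prime_dvd_prime_iff_eq hprime Fact.out).mp
    (hprime.dvd_of_dvd_pow (hk ▸ relIndex_dvd_card H K))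

theorem of_le_of_relIndex_eq_pow {H K : Subgroup G} [Finite H] (hH : IsPGroup p H) (hHK : H ≤ K)
    {k : ℕ} (hk : H.relIndex K = p ^ k) : IsPGroup p K := by
  obtain ⟨m, hm⟩ := IsPGroup.iff_card.mp hH
  refine IsPGroup.of_card (n := m + k) ?_
  rw [← relIndex_bot_left, ← relIndex_mul_relIndex ⊥ H K bot_le hHK, relIndex_bot_left, hm, hk,
    pow_add]

theorem le_of_le_of_not_dvd_relIndex {P Q H : Subgroup G} [Finite Q] (hQ : IsPGroup p Q)
    (hPQ : P ≤ Q) (hQH : Q ≤ H) (hP : ¬ p ∣ P.relIndex H) : Q ≤ P := by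
  obtain ⟨k, hk⟩ : ∃ k, P.relIndex Q = p ^ k := hQ.index _
  rw [← relIndex_mul_relIndex P Q H hPQ hQH] at hP
  have : P.relIndex Q = 1 := by
    rcases k with _ | k
    · exact hk
    · exact absurd (dvd_mul_of_dvd_left (hk ▸ dvd_pow_self p k.succ_ne_zero) _) hP
  exact relIndex_eq_one.mp this

theorem normalizer_le_normalizer [Finite G] {P H : Subgroup G} (hP : IsPGroup p P)
    (hPH : P ≤ H) (hindex : ¬ p ∣ P.relIndex H) (hH : H ≤ normalizer (P : Set G)) :
    normalizer (H : Set G) ≤ normalizer (P : Set G) := by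
  refine le_normalizer_of_forall_conj_mem fun x hx y hy => ?_
  set Q := P.map (MulAut.conj x).toMonoidHom
  have hQH : Q ≤ H := by
    rintro _ ⟨z, hz, rfl⟩
    exact (mem_normalizer_iff.mp hx z).mp (hPH hz)
  have hQP : Q ⊔ P ≤ P := (hP.map _).to_sup_of_normal_right' hP (hQH.trans hH)
    |>.le_of_le_of_not_dvd_relIndex le_sup_right (sup_le hQH hPH) hindex
  exact hQP (le_sup_left (a := Q) ⟨y, hy, rfl⟩)

theorem exists_sylow_normal (hG : IsPGroup p G) : ∃ P : Sylow p G, (P : Subgroup G).Normal :=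
  ⟨(hG.to_subgroup ⊤).toSylow (by simp [(Fact.out : p.Prime).ne_one]), Subgroup.normal_top⟩

end IsPGroup

namespace Subgroup

variable {G : Type*} [Group G] {n : ℕ}

noncomputable def stepIndex (f : Fin (n + 1) → Subgroup G) (i : Fin n) : ℕ :=
  (f i.castSucc).relIndex (f i.succ)

structure IsPrimeIndexSeries (f : Fin (n + 1) → Subgroup G) : Prop where
  zero_eq_bot : f 0 = ⊥
  last_eq_top : f (Fin.last n) = ⊤
  le_succ (i : Fin n) : f i.castSucc ≤ f i.succ
  le_normalizer (i : Fin n) : f i.succ ≤ normalizer (f i.castSucc : Set G)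
  prime (i : Fin n) : (stepIndex f i).Prime

def snocTop (N : Subgroup G) (f : Fin (n + 1) → Subgroup N) : Fin (n + 2) → Subgroup G :=
  Fin.snoc (fun i => (f i).map N.subtype) ⊤

variable {N : Subgroup G} {f : Fin (n + 1) → Subgroup N}

theorem stepIndex_snocTop_castSucc (i : Fin n) :
    stepIndex (N.snocTop f) i.castSucc = stepIndex f i := by
  rw [stepIndex, snocTop, Fin.succ_castSucc, Fin.snoc_castSucc, Fin.snoc_castSucc,
    relIndex_map_map_of_injective _ _ N.subtype_injective, stepIndex]

theorem snocTop_castSucc_last (hf : f (Fin.last n) = ⊤) :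
    N.snocTop f (Fin.last n).castSucc = N := by
  rw [snocTop, Fin.snoc_castSucc, hf, ← MonoidHom.range_eq_map, range_subtype]

theorem stepIndex_snocTop_last (hf : f (Fin.last n) = ⊤) :
    stepIndex (N.snocTop f) (Fin.last n) = N.index := by
  rw [stepIndex, snocTop_castSucc_last hf, Fin.succ_last, snocTop, Fin.snoc_last,
    relIndex_top_right]

theorem IsPrimeIndexSeries.snocTop [N.Normal] (hf : IsPrimeIndexSeries f) (hN : N.index.Prime) :
    IsPrimeIndexSeries (N.snocTop f) where
  zero_eq_bot := by
    rw [← Fin.castSucc_zero, Subgroup.snocTop, Fin.snoc_castSucc, hf.zero_eq_bot, map_bot]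
  last_eq_top := Fin.snoc_last (α := fun _ => Subgroup G) _ _
  le_succ := Fin.lastCases (by rw [Fin.succ_last, Subgroup.snocTop, Fin.snoc_last]; exact le_top)
    fun i => by
      rw [Fin.succ_castSucc, Subgroup.snocTop, Fin.snoc_castSucc, Fin.snoc_castSucc]
      exact map_mono (hf.le_succ i)
  le_normalizer := Fin.lastCases
    (by rw [snocTop_castSucc_last hf.last_eq_top]; exact le_normalizer_of_normal)
    fun i => by
      rw [Fin.succ_castSucc, Subgroup.snocTop, Fin.snoc_castSucc, Fin.snoc_castSucc]
      exact (map_mono (hf.le_normalizer i)).trans (le_normalizer_map _)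
  prime := Fin.lastCases (by rw [stepIndex_snocTop_last hf.last_eq_top]; exact hN)
    fun i => by rw [stepIndex_snocTop_castSucc]; exact hf.prime i

-- In `Prop`, monotone means that once a factor differs from `p`, so do all later ones.
theorem monotone_stepIndex_snocTop_ne {p : ℕ} (hf : f (Fin.last n) = ⊤)
    (hmono : Monotone fun i => stepIndex f i ≠ p) (hN : N.index ≠ p) :
    Monotone fun i => stepIndex (N.snocTop f) i ≠ p := by
  intro i j hij
  induction j using Fin.lastCases with
  | last => exact fun _ => show _ ≠ p by rwa [stepIndex_snocTop_last hf]
  | cast j =>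
    obtain ⟨i, rfl⟩ :=
      Fin.exists_castSucc_eq.mpr (Fin.ne_last_of_lt (hij.trans_lt (Fin.castSucc_lt_last j)))
    simp only [stepIndex_snocTop_castSucc]
    exact hmono (Fin.castSucc_le_castSucc_iff.mp hij)

end Subgroup

namespace Subgroup.IsPrimeIndexSeries

variable {G : Type*} [Group G] {n : ℕ} {f : Fin (n + 1) → Subgroup G} {p : ℕ}

theorem isSolvable (hf : IsPrimeIndexSeries f) : Group.IsSolvable G := by
  have key (i : Fin (n + 1)) : Group.IsSolvable (f i) := by
    induction i using Fin.induction with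
    | zero => rw [hf.zero_eq_bot]; infer_instance
    | succ i ih =>
      exact isSolvable_of_relIndex_prime (hf.le_succ i) (hf.le_normalizer i) (hf.prime i)
  have := key (Fin.last n)
  rw [hf.last_eq_top] at this
  exact Group.isSolvable_of_surjective (f := (⊤ : Subgroup G).subtype)
    fun g => ⟨⟨g, mem_top g⟩, rfl⟩

variable [Fact p.Prime] [Finite G]

theorem isPGroup (hf : IsPrimeIndexSeries f) {i : Fin (n + 1)}
    (h : ∀ j : Fin n, j.castSucc < i → stepIndex f j = p) : IsPGroup p (f i) := by
  induction i using Fin.induction with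
  | zero => rw [hf.zero_eq_bot]; exact IsPGroup.of_bot
  | succ i ih =>
    exact (ih fun j hj => h j (hj.trans i.castSucc_lt_succ)).of_le_of_relIndex_eq_pow
      (hf.le_succ i) ((h i i.castSucc_lt_succ).trans (pow_one p).symm)

theorem exists_normal_sylow (hf : IsPrimeIndexSeries f)
    (hmono : Monotone fun i => stepIndex f i ≠ p) : ∃ P : Sylow p G, (P : Subgroup G).Normal := by
  have hp : p ≠ 1 := (Fact.out : p.Prime).ne_one
  have normal_pSubgroup (i : Fin (n + 1)) : ∃ P ≤ f i, IsPGroup p P ∧ ¬ p ∣ P.relIndex (f i) ∧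
      f i ≤ normalizer (P : Set G) := by
    induction i using Fin.induction with
    | zero =>
      exact ⟨⊥, bot_le, IsPGroup.of_bot, by simp [hf.zero_eq_bot, hp], by simp [hf.zero_eq_bot]⟩
    | succ i ih =>
      by_cases hi : stepIndex f i = p
      · refine ⟨f i.succ, le_rfl, hf.isPGroup fun j hj => ?_, by simp [hp], Subgroup.le_normalizer⟩
        by_contra hj'
        exact hmono (Fin.castSucc_lt_succ_iff.mp hj) hj' hi
      · obtain ⟨P, hPi, hP, hindex, hnorm⟩ := ih
        refine ⟨P, hPi.trans (hf.le_succ i), hP, ?_, ?_⟩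
        · rw [← relIndex_mul_relIndex P _ _ hPi (hf.le_succ i), Nat.Prime.dvd_mul Fact.out]
          exact not_or_intro hindex
            fun h => hi ((Nat.prime_dvd_prime_iff_eq Fact.out (hf.prime i)).mp h).symm
        · exact (hf.le_normalizer i).trans (hP.normalizer_le_normalizer hPi hindex hnorm)
  obtain ⟨P, -, hP, hindex, hnorm⟩ := normal_pSubgroup (Fin.last n)
  rw [hf.last_eq_top, relIndex_top_right] at hindex
  rw [hf.last_eq_top, top_le_iff, normalizer_eq_top_iff] at hnorm
  exact ⟨hP.toSylow hindex, hnorm⟩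

end Subgroup.IsPrimeIndexSeries

theorem exists_isPrimeIndexSeries_of_sylow_normal {G : Type*} [Group G] [Finite G]
    [Group.IsSolvable G] {p : ℕ} [Fact p.Prime] (P : Sylow p G) (hP : (P : Subgroup G).Normal) :
    ∃ (n : ℕ) (f : Fin (n + 1) → Subgroup G),
      IsPrimeIndexSeries f ∧ Monotone fun i => stepIndex f i ≠ p := by
  induction h : Nat.card G using Nat.strong_induction_on generalizing G with
  | _ k ih =>
  rcases subsingleton_or_nontrivial G with hG | hG
  · exact ⟨0, fun _ => ⊤, ⟨Subsingleton.elim _ _, rfl, Fin.elim0, Fin.elim0, fun i => i.elim0⟩,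
      fun i => i.elim0⟩
  by_cases hPG : (P : Subgroup G) = ⊤
  · have hsub (H : Subgroup G) : IsPGroup p H := P.isPGroup'.to_le (hPG ▸ le_top)
    obtain ⟨N, _, -, hN⟩ := exists_normal_le_index_prime (⊥ : Subgroup G) bot_ne_top
    obtain ⟨Q, hQ⟩ := (hsub N).exists_sylow_normal
    obtain ⟨n, f, hf, -⟩ := ih _ (h ▸ card_lt_of_one_lt_index hN.one_lt) Q hQ rfl
    exact ⟨n + 1, _, hf.snocTop hN,
      fun i _ _ hi => absurd ((hsub _).relIndex_eq_of_prime ((hf.snocTop hN).prime i)) hi⟩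
  · obtain ⟨N, _, hPN, hN⟩ := exists_normal_le_index_prime (P : Subgroup G) hPG
    have hPN' : ((P.subtype hPN) : Subgroup N).Normal := by
      rw [Sylow.coe_subtype]; infer_instance
    obtain ⟨n, f, hf, hmono⟩ := ih _ (h ▸ card_lt_of_one_lt_index hN.one_lt) _ hPN' rfl
    exact ⟨n + 1, _, hf.snocTop hN, monotone_stepIndex_snocTop_ne hf.last_eq_top hmono
      fun h => P.not_dvd_index ((dvd_of_eq h.symm).trans (index_dvd_of_le hPN))⟩

theorem solvable_with_normal_sylow_iff_chain_general {G : Type*} [Group G] [Finite G]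
    (p : ℕ) (hp : p.Prime) :
    (IsSolvable G ∧ ∃ P : Sylow p G, (P : Subgroup G).Normal) ↔
      ∃ (n : ℕ) (f : Fin (n + 1) → Subgroup G),
        f 0 = ⊥ ∧ f (Fin.last n) = ⊤ ∧
        (∀ i : Fin n, f i.castSucc ≤ f i.succ ∧
          (∀ x ∈ f i.succ, ∀ h ∈ f i.castSucc, x * h * x⁻¹ ∈ f i.castSucc) ∧
          ((f i.castSucc).relIndex (f i.succ)).Prime) ∧
        ∀ i j : Fin n, (j : ℕ) = (i : ℕ) + 1 →
          (f i.castSucc).relIndex (f i.succ) ≠ p →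
          (f j.castSucc).relIndex (f j.succ) ≠ p := by
  have := Fact.mk hp
  constructor
  · rintro ⟨hG, P, hP⟩
    have : Group.IsSolvable G := hG
    obtain ⟨n, f, hf, hmono⟩ := exists_isPrimeIndexSeries_of_sylow_normal P hP
    refine ⟨n, f, hf.zero_eq_bot, hf.last_eq_top, fun i => ⟨hf.le_succ i, ?_, hf.prime i⟩,
      fun i j hij => hmono (Fin.le_iff_val_le_val.mpr (by omega))⟩
    exact fun x hx y hy => (mem_normalizer_iff.mp (hf.le_normalizer i hx) y).mp hy
  · rintro ⟨n, f, h0, htop, hstep, hnext⟩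
    have hf : IsPrimeIndexSeries f := ⟨h0, htop, fun i => (hstep i).1,
      fun i => le_normalizer_of_forall_conj_mem (hstep i).2.1, fun i => (hstep i).2.2⟩
    exact ⟨hf.isSolvable, hf.exists_normal_sylow (Fin.monotone_of_le_of_val_eq_succ hnext)⟩

theorem solvable_with_normal_sylow_iff_chain {G : Type*} [Group G] [Finite G]
    (p : ℕ) (hp : p.Prime) (hdvd : p ∣ Nat.card G) :
    (IsSolvable G ∧ ∃ P : Sylow p G, (P : Subgroup G).Normal) ↔
      ∃ (n : ℕ) (f : Fin (n + 1) → Subgroup G),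
        f 0 = ⊥ ∧ f (Fin.last n) = ⊤ ∧
        (∀ i : Fin n, f i.castSucc ≤ f i.succ ∧
          (∀ x ∈ f i.succ, ∀ h ∈ f i.castSucc, x * h * x⁻¹ ∈ f i.castSucc) ∧
          ((f i.castSucc).relIndex (f i.succ)).Prime) ∧
        ∀ i j : Fin n, (j : ℕ) = (i : ℕ) + 1 →
          (f i.castSucc).relIndex (f i.succ) ≠ p →
          (f j.castSucc).relIndex (f j.succ) ≠ p :=
  solvable_with_normal_sylow_iff_chain_general p hp
end

section
/- Let G be a group, H a subgroup of G of finite index, and G_1, …, G_k subgroups of G each containing H. Assume that either (i) every G_i is subnormal in G, or (ii) there is a chain H = K_0 ≤ K_1 ≤ ⋯ ≤ K_n = G of subgroups in which each K_{j-1} is normal in K_j and each index [K_j : K_{j-1}] is prime. Then for any elements a_1, …, a_k ∈ G, the number of distinct left cosets xH with x ∈ ⋃_{i=1}^k a_iG_i is at least the number of integers n with 0 ≤ n < [G : H] such that [G : G_i] divides n for some i ∈ {1, …, k}. -/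
/-!
The proof is an induction on `[G : H]` for a weighted inequality: given weights `e i ∣ M`,
count below `[G : H] * M` the multiples of some `[G : Gs i] * e i`, and compare with the pairs
`(xH, m)`, `m < M`, such that `xH ⊆ a i • Gs i` and `e i ∣ m` for some `i` (this is the theorem
for `G × ℤ/M`).

If every `Gs i` is `H` or `G`, both sides are counted directly: the indices with `Gs i = G`
contribute an `M`-periodic set, and every other multiple is `[G : H]` times a multiple of some
`e i` with `Gs i = H`, which is matched by the coset `a i • H`.

Otherwise either hypothesis provides a normal subgroup `K` with `H < K < G`: the penultimate
term of a subnormal series of some `Gs i ∉ {H, G}`, or the penultimate term of the prime series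
of `H`. The bound for `G ⧸ K` (trivial subgroup, the images of the `Gs i`, weights
`[K : Gs i ⊓ K] * e i`) reduces the left side to a sum over the cosets `q` of `K`. The cosets
`a i • Gs i` that meet `q` cut out cosets of `Gs i ⊓ K` in `K`, and the bound for `K` turns the
summand for `q` into the number of pairs whose coset `xH` lies in `q`, because
`G ⧸ H ≃ G ⧸ K × K ⧸ H`.
-/

open scoped Pointwise

namespace Nat

variable {p q : ℕ → Prop} [DecidablePred p] [DecidablePred q]

theorem count_or (N : ℕ) :
    count (fun n => p n ∨ q n) N = count p N + count (fun n => ¬p n ∧ q n) N := by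
  induction N with
  | zero => simp
  | succ N ih =>
    simp only [count_succ, ih]
    by_cases hp : p N <;> by_cases hq : q N <;> simp [hp, hq] <;> omega

theorem count_mul_of_periodic {M : ℕ} (hp : Function.Periodic p M) (N : ℕ) :
    count p (N * M) = N * count p M := by
  induction N with
  | zero => simp
  | succ N ih =>
    have hNM : ∀ k, p (N * M + k) = p k := fun k => by rw [add_comm]; exact hp.nat_mul N k
    rw [succ_mul, count_add, ih, succ_mul]
    simp only [hNM]

theorem count_mul_le_count (N M : ℕ) (hp : ∀ n, p n → N ∣ n) :
    count p (N * M) ≤ count (fun m => p (N * m)) M := by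
  rw [count_eq_card_filter_range, count_eq_card_filter_range]
  refine Finset.card_le_card_of_injOn (· / N) (fun n hn => ?_) (fun n hn n' hn' h => ?_)
  · simp only [Finset.coe_filter, Finset.mem_range, Set.mem_ofPred_eq] at hn ⊢
    obtain ⟨m, rfl⟩ := hp n hn.2
    have hN : 0 < N := Nat.pos_of_mul_pos_right (Nat.zero_lt_of_lt hn.1)
    rw [Nat.mul_div_cancel_left m hN]
    exact ⟨Nat.lt_of_mul_lt_mul_left hn.1, hn.2⟩
  · simp only [Finset.coe_filter, Finset.mem_range, Set.mem_ofPred_eq] at hn hn'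
    rw [← Nat.div_mul_cancel (hp n hn.2), ← Nat.div_mul_cancel (hp n' hn'.2)]
    exact congrArg (· * N) h

theorem count_exists_le_sum {ι : Type*} [Fintype ι] {r : ι → ℕ → Prop}
    [∀ i, DecidablePred (r i)] [DecidablePred fun n => ∃ i, r i n] (N : ℕ) :
    count (fun n => ∃ i, r i n) N ≤ ∑ i, count (r i) N := by
  classical
  simp only [count_eq_card_filter_range]
  refine (Finset.card_le_card fun n hn => ?_).trans Finset.card_biUnion_le
  simp only [Finset.mem_filter, Finset.mem_biUnion, Finset.mem_univ, true_and] at hn ⊢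
  obtain ⟨hn, i, hi⟩ := hn
  exact ⟨i, hn, hi⟩

end Nat

section

variable {G : Type*} [Group G] {ι : Type*}

theorem IsSubnormal.subgroup_isSubnormal_s7 {A : Subgroup G} (h : IsSubnormal A) :
    A.IsSubnormal := by
  obtain ⟨n, f, rfl, hlast, hstep⟩ := h
  suffices ∀ j, (f j).IsSubnormal from this 0
  intro j
  induction j using Fin.reverseInduction with
  | last => exact hlast ▸ Subgroup.IsSubnormal.top
  | cast j ih =>
    refine .step _ _ (hstep j).1 ih ⟨fun x hx g => ?_⟩
    simpa [Subgroup.mem_subgroupOf] using (hstep j).2 g g.2 x hx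

def HasPrimeNormalSeries (H : Subgroup G) : Prop :=
  ∃ (n : ℕ) (f : Fin (n + 1) → Subgroup G),
    f 0 = H ∧ f (Fin.last n) = ⊤ ∧
    ∀ i : Fin n, f i.castSucc ≤ f i.succ ∧
      (∀ x ∈ f i.succ, ∀ h ∈ f i.castSucc, x * h * x⁻¹ ∈ f i.castSucc) ∧
      ((f i.castSucc).relIndex (f i.succ)).Prime

theorem HasPrimeNormalSeries.exists_normal_prime_index {H : Subgroup G}
    (h : HasPrimeNormalSeries H) (hH : H ≠ ⊤) :
    ∃ K : Subgroup G, K.Normal ∧ H ≤ K ∧ K.index.Prime ∧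
      HasPrimeNormalSeries (H.subgroupOf K) := by
  obtain ⟨n, f, h0, hlast, hstep⟩ := h
  cases n with
  | zero => exact absurd (h0 ▸ hlast) hH
  | succ m =>
    have hmono : Monotone f := Fin.monotone_iff_le_succ.mpr fun i => (hstep i).1
    set K := f (Fin.last m).castSucc
    obtain ⟨-, hnormal, hprime⟩ := hstep (Fin.last m)
    rw [Fin.succ_last, hlast] at hnormal hprime
    rw [Subgroup.relIndex_top_right] at hprime
    refine ⟨K, ⟨fun x hx g => hnormal g trivial x hx⟩, h0 ▸ hmono (Fin.zero_le _), hprime,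
      m, fun j => (f j.castSucc).subgroupOf K, by simp [h0], Subgroup.subgroupOf_self K,
      fun j => ?_⟩
    have hleK : f j.succ.castSucc ≤ K :=
      hmono (Fin.castSucc_le_castSucc_iff.mpr (Fin.le_last _))
    obtain ⟨hle, hconj, hprime⟩ := hstep j.castSucc
    rw [Fin.succ_castSucc] at hle hconj hprime
    refine ⟨Subgroup.subgroupOf_mono _ hle, fun x hx y hy => ?_,
      by rwa [Subgroup.relIndex_subgroupOf hleK]⟩
    simp only [Subgroup.mem_subgroupOf, Subgroup.coe_mul, Subgroup.coe_inv] at hx hy ⊢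
    exact hconj x hx y hy

theorem exists_normal_of_isSubnormal_or_hasPrimeNormalSeries {H : Subgroup G}
    {Gs : ι → Subgroup G} (hcond : (∀ i, (Gs i).IsSubnormal) ∨ HasPrimeNormalSeries H)
    (hH : H.index ≠ 0) (hle : ∀ i, H ≤ Gs i) {i₀ : ι} (hi₀H : Gs i₀ ≠ H) (hi₀T : Gs i₀ ≠ ⊤) :
    ∃ (K : Subgroup G) (_ : K.Normal), H < K ∧ K ≠ ⊤ ∧
      ((∀ i, ((Gs i).subgroupOf K).IsSubnormal) ∨ HasPrimeNormalSeries (H.subgroupOf K)) ∧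
      ∀ i, ((Gs i).map (QuotientGroup.mk' K)).IsSubnormal := by
  have hHi₀ : H < Gs i₀ := (hle i₀).lt_of_ne' hi₀H
  rcases hcond with hsub | hprime
  · obtain ⟨K, hK, hi₀K, hKT⟩ := (hsub i₀).exists_normal_and_le_and_lt_top_of_ne hi₀T
    exact ⟨K, hK, hHi₀.trans_le hi₀K, hKT.ne, .inl fun i => (hsub i).subgroupOf,
      fun i => (hsub i).quotient⟩
  · have hHT : H ≠ ⊤ := (hHi₀.trans_le le_top).ne
    obtain ⟨K, hK, hHK, hKp, hseries⟩ := hprime.exists_normal_prime_index hHT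
    have : Fact (Nat.card (G ⧸ K)).Prime := ⟨hKp⟩
    refine ⟨K, hK, hHK.lt_of_ne ?_, fun h => Nat.not_prime_one (by simpa [h] using hKp),
      .inr hseries, fun i => ?_⟩
    · rintro rfl
      have : H.FiniteIndex := ⟨hH⟩
      have hlt : (Gs i₀).index < H.index := Subgroup.index_strictAnti hHi₀
      rcases hKp.eq_one_or_self_of_dvd _ (Subgroup.index_dvd_of_le (hle i₀)) with h | h
      · exact hi₀T (Subgroup.index_eq_one.mp h)
      · exact hlt.ne h
    · rcases ((Gs i).map (QuotientGroup.mk' K)).eq_bot_or_eq_top_of_prime_card with h | h <;>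
        simp [h]

theorem Subgroup.index_map_mk'_mul_relIndex (K : Subgroup G) [K.Normal] (A : Subgroup G)
    (hA : K.relIndex A ≠ 0) : (A.map (QuotientGroup.mk' K)).index * A.relIndex K = A.index := by
  have hmap : (A.map (QuotientGroup.mk' K)).index = (A ⊔ K).index := by
    rw [Subgroup.index_map, QuotientGroup.ker_mk',
      (QuotientGroup.mk' K).range_eq_top_of_surjective (QuotientGroup.mk'_surjective K),
      Subgroup.index_top, mul_one]
  have hAK : A.relIndex K * K.index = (A ⊓ K).index := by
    simpa using Subgroup.relIndex_inf_mul_relIndex A K ⊤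
  have hKA : K.relIndex A * A.index = (A ⊓ K).index := by
    simpa [inf_comm] using Subgroup.relIndex_inf_mul_relIndex K A ⊤
  have hK : K.relIndex A * (A ⊔ K).index = K.index := by
    rw [← Subgroup.relIndex_sup_right A K, Subgroup.relIndex_mul_index le_sup_right]
  refine Nat.eq_of_mul_eq_mul_left (Nat.pos_of_ne_zero hA) ?_
  calc K.relIndex A * ((A.map (QuotientGroup.mk' K)).index * A.relIndex K)
      = A.relIndex K * (K.relIndex A * (A ⊔ K).index) := by rw [hmap]; ring
    _ = K.relIndex A * A.index := by rw [hK, hAK, hKA]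

theorem QuotientGroup.mk_mem_image_smul_iff {H A : Subgroup G} (hHA : H ≤ A) {g x : G} :
    (g : G ⧸ H) ∈ (QuotientGroup.mk : G → G ⧸ H) '' (x • (A : Set G)) ↔
      g ∈ x • (A : Set G) := by
  refine ⟨fun ⟨y, hy, hyg⟩ => ?_, fun h => ⟨g, h, rfl⟩⟩
  rw [QuotientGroup.eq] at hyg
  rw [mem_leftCoset_iff] at hy ⊢
  simpa [mul_assoc] using A.mul_mem hy (hHA hyg)

theorem QuotientGroup.mem_image_smul_iff_of_eq_or_eq_top {H A : Subgroup G}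
    (hA : A = H ∨ A = ⊤) (x : G) (q : G ⧸ H) :
    q ∈ (QuotientGroup.mk : G → G ⧸ H) '' (x • (A : Set G)) ↔
      A = ⊤ ∨ A = H ∧ (x : G ⧸ H) = q := by
  induction q using QuotientGroup.induction_on with | H g =>
  rcases hA with rfl | rfl
  · rw [QuotientGroup.mk_mem_image_smul_iff le_rfl, mem_leftCoset_iff, QuotientGroup.eq,
      and_iff_right rfl]
    exact ⟨.inr, fun h => h.elim (fun h => h ▸ Subgroup.mem_top _) id⟩
  · simp

theorem QuotientGroup.image_mk_smul (K : Subgroup G) [K.Normal] (A : Subgroup G) (x : G) :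
    (QuotientGroup.mk : G → G ⧸ K) '' (x • (A : Set G)) =
      (x : G ⧸ K) • ((A.map (QuotientGroup.mk' K) : Subgroup (G ⧸ K)) : Set (G ⧸ K)) := by
  rw [Subgroup.coe_map]
  exact Set.image_smul_distrib (QuotientGroup.mk' K) x (A : Set G)

theorem mul_mem_leftCoset_iff_of_mul_mem {A : Subgroup G} {b c k x : G}
    (hb : c * b ∈ x • (A : Set G)) : c * k ∈ x • (A : Set G) ↔ b⁻¹ * k ∈ A := by
  rw [mem_leftCoset_iff] at hb ⊢
  rw [← A.mul_mem_cancel_left hb]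
  simp [mul_assoc]

noncomputable def countMultiples (N : ℕ) (d : ι → ℕ) : ℕ :=
  Nat.card {n : ℕ // n < N ∧ ∃ i, d i ∣ n}

theorem countMultiples_congr {κ : Type*} {N : ℕ} {d : ι → ℕ} {d' : κ → ℕ}
    (h : ∀ n, (∃ i, d i ∣ n) ↔ ∃ j, d' j ∣ n) : countMultiples N d = countMultiples N d' :=
  Nat.card_congr (Equiv.subtypeEquivRight fun n => and_congr_right fun _ => h n)

theorem countMultiples_eq_count (N : ℕ) (d : ι → ℕ) [DecidablePred fun n => ∃ i, d i ∣ n] :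
    countMultiples N d = Nat.count (fun n => ∃ i, d i ∣ n) N := by
  rw [Nat.count_eq_card_filter_range, ← Nat.card_eq_finsetCard]
  exact Nat.card_congr (Equiv.subtypeEquivRight fun n => by simp)

noncomputable def countWeightedCosets (H : Subgroup G) (Gs : ι → Subgroup G) (a : ι → G)
    (e : ι → ℕ) (M : ℕ) : ℕ :=
  Nat.card {p : (G ⧸ H) × ℕ // p.2 < M ∧
    ∃ i, p.1 ∈ (QuotientGroup.mk : G → G ⧸ H) '' (a i • (Gs i : Set G)) ∧ e i ∣ p.2}

def CosetBound (H : Subgroup G) (Gs : ι → Subgroup G) (a : ι → G) (e : ι → ℕ) (M : ℕ) : Prop :=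
  countMultiples (H.index * M) (fun i => (Gs i).index * e i) ≤ countWeightedCosets H Gs a e M

theorem countWeightedCosets_eq_sum (H : Subgroup G) [Fintype (G ⧸ H)] (Gs : ι → Subgroup G)
    (a : ι → G) (e : ι → ℕ) (M : ℕ) :
    countWeightedCosets H Gs a e M = ∑ q : G ⧸ H, countMultiples M
      (fun i : {i // q ∈ (QuotientGroup.mk : G → G ⧸ H) '' (a i • (Gs i : Set G))} => e i) := by
  have (q : G ⧸ H) : Finite {m // m < M ∧
      ∃ i : {i // q ∈ (QuotientGroup.mk : G → G ⧸ H) '' (a i • (Gs i : Set G))}, e i ∣ m} :=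
    ((Set.finite_Iio M).subset fun _ hm => hm.1).to_subtype
  unfold countWeightedCosets countMultiples
  rw [← Nat.card_sigma]
  exact Nat.card_congr ((Equiv.subtypeProdEquivSigmaSubtype fun (q : G ⧸ H) m => m < M ∧
    ∃ i, q ∈ (QuotientGroup.mk : G → G ⧸ H) '' (a i • (Gs i : Set G)) ∧ e i ∣ m).trans
    (Equiv.sigmaCongrRight fun q => Equiv.subtypeEquivRight fun m => by simp))

theorem countWeightedCosets_one (H : Subgroup G) (Gs : ι → Subgroup G) (a : ι → G) :
    countWeightedCosets H Gs a (fun _ => 1) 1 =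
      Nat.card ((QuotientGroup.mk : G → G ⧸ H) '' ⋃ i, a i • (Gs i : Set G)) := by
  rw [Set.image_iUnion]
  refine Nat.card_congr
    { toFun := fun p => ⟨p.1.1, Set.mem_iUnion.mpr (p.2.2.imp fun _ => And.left)⟩
      invFun := fun q =>
        ⟨(q, 0), Nat.one_pos, (Set.mem_iUnion.mp q.2).imp fun _ h => ⟨h, one_dvd 0⟩⟩
      left_inv := fun ⟨⟨q, m⟩, hm, _⟩ => ?_
      right_inv := fun _ => rfl }
  obtain rfl : m = 0 := Nat.lt_one_iff.mp hm
  rfl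

theorem CosetBound.of_forall_eq_or_eq_top {H : Subgroup G} {Gs : ι → Subgroup G} (a : ι → G)
    {e : ι → ℕ} {M : ℕ} (hH : H.index ≠ 0) (he : ∀ i, e i ∣ M)
    (hGs : ∀ i, Gs i = H ∨ Gs i = ⊤) : CosetBound H Gs a e M := by
  classical
  let := Subgroup.fintypeOfIndexNeZero hH
  let A : ℕ → Prop := fun m => ∃ i, Gs i = ⊤ ∧ e i ∣ m
  let B : G ⧸ H → ℕ → Prop := fun q m => ∃ i, Gs i = H ∧ (a i : G ⧸ H) = q ∧ e i ∣ m
  let P : ℕ → Prop := fun n => ∃ i, (Gs i).index * e i ∣ n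
  have hA_dvd {m n : ℕ} (h : m ∣ n) : A m → A n := fun ⟨i, hi, hd⟩ => ⟨i, hi, hd.trans h⟩
  have hA_periodic : Function.Periodic A M := fun m => propext
    ⟨fun ⟨i, hi, hd⟩ => ⟨i, hi, (Nat.dvd_add_left (he i)).mp hd⟩,
     fun ⟨i, hi, hd⟩ => ⟨i, hi, dvd_add hd (he i)⟩⟩
  have hnotA {n : ℕ} (hA : ¬A n) (hn : P n) :
      ∃ i, Gs i = H ∧ H.index * e i ∣ n := by
    obtain ⟨i, hi⟩ := hn
    rcases hGs i with h | h
    · exact ⟨i, h, by rwa [h] at hi⟩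
    · exact absurd ⟨i, h, by simpa [h] using hi⟩ hA
  have hfiber (q : G ⧸ H) (m : ℕ) :
      (∃ i : {i // q ∈ (QuotientGroup.mk : G → G ⧸ H) '' (a i • (Gs i : Set G))}, e i ∣ m) ↔
        A m ∨ B q m := by
    simp only [Subtype.exists, QuotientGroup.mem_image_smul_iff_of_eq_or_eq_top (hGs _), A, B]
    grind
  have hrhs : countWeightedCosets H Gs a e M =
      H.index * Nat.count A M + ∑ q, Nat.count (fun m => ¬A m ∧ B q m) M := by
    simp only [countWeightedCosets_eq_sum, countMultiples_eq_count, hfiber, Nat.count_or,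
      Finset.sum_add_distrib, Finset.sum_const, Finset.card_univ, smul_eq_mul,
      ← Nat.card_eq_fintype_card, ← Subgroup.index_eq_card]
  rw [CosetBound, hrhs, countMultiples_eq_count, ← Nat.count_mul_of_periodic hA_periodic]
  calc Nat.count P (H.index * M)
      ≤ Nat.count (fun n => A n ∨ P n) (H.index * M) := Nat.count_mono_left fun _ _ => .inr
    _ = Nat.count A (H.index * M) + Nat.count (fun n => ¬A n ∧ P n) (H.index * M) :=
        Nat.count_or _
    _ ≤ Nat.count A (H.index * M) +
          Nat.count (fun m => ¬A (H.index * m) ∧ P (H.index * m)) M := by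
        gcongr
        refine Nat.count_mul_le_count H.index M fun n ⟨hA, hn⟩ => ?_
        obtain ⟨i, -, hi⟩ := hnotA hA hn
        exact (dvd_mul_right H.index _).trans hi
    _ ≤ Nat.count A (H.index * M) + Nat.count (fun m => ∃ q, ¬A m ∧ B q m) M := by
        refine Nat.add_le_add_left (Nat.count_mono_left fun m _ ⟨hA, hm⟩ => ?_) _
        obtain ⟨i, hi, hd⟩ := hnotA hA hm
        exact ⟨a i, fun h => hA (hA_dvd (dvd_mul_left m H.index) h), i, hi, rfl,
          Nat.dvd_of_mul_dvd_mul_left (Nat.pos_of_ne_zero hH) hd⟩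
    _ ≤ Nat.count A (H.index * M) + ∑ q, Nat.count (fun m => ¬A m ∧ B q m) M := by
        gcongr
        exact Nat.count_exists_le_sum M

theorem countWeightedCosets_bot {Q : Type*} [Group Q] [Fintype Q] (As : ι → Subgroup Q)
    (x : ι → Q) (e : ι → ℕ) (M : ℕ) :
    countWeightedCosets (⊥ : Subgroup Q) As x e M =
      ∑ q : Q, countMultiples M (fun i : {i // q ∈ x i • (As i : Set Q)} => e i) := by
  classical
  have hbij : Function.Bijective (QuotientGroup.mk : Q → Q ⧸ (⊥ : Subgroup Q)) :=
    ⟨fun q q' h => by simpa [QuotientGroup.eq, inv_mul_eq_one] using h,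
      QuotientGroup.mk_surjective⟩
  rw [countWeightedCosets_eq_sum]
  refine (Fintype.sum_bijective _ hbij _ _ fun q => countMultiples_congr fun m => ?_).symm
  simp only [Subtype.exists, QuotientGroup.mk_mem_image_smul_iff bot_le, exists_prop]

theorem sum_countWeightedCosets_subgroupOf {H K : Subgroup G} (hHK : H ≤ K)
    [Fintype (G ⧸ H)] [Fintype (G ⧸ K)] [Fintype (K ⧸ H.subgroupOf K)]
    {Gs : ι → Subgroup G} (hle : ∀ i, H ≤ Gs i) (a : ι → G) (e : ι → ℕ) (M : ℕ)
    (b : ∀ q : G ⧸ K, {i // q ∈ (QuotientGroup.mk : G → G ⧸ K) '' (a i • (Gs i : Set G))} → K)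
    (hb : ∀ q i, q.out * (b q i : G) ∈ a i.1 • (Gs i.1 : Set G)) :
    ∑ q : G ⧸ K, countWeightedCosets (H.subgroupOf K) (fun i => (Gs i.1).subgroupOf K) (b q)
      (fun i => e i.1) M = countWeightedCosets H Gs a e M := by
  rw [countWeightedCosets_eq_sum H, ← (Subgroup.quotientEquivProdOfLE hHK).symm.sum_comp,
    Fintype.sum_prod_type]
  refine Finset.sum_congr rfl fun q _ => ?_
  rw [countWeightedCosets_eq_sum]
  refine Finset.sum_congr rfl fun r _ => countMultiples_congr fun m => ?_
  induction r using QuotientGroup.induction_on with | H k =>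
  have hq : ((q.out * k : G) : G ⧸ K) = q := by
    rw [← QuotientGroup.out_eq' q, QuotientGroup.eq]
    simp
  have key (i : ι) : (∃ h, (k : K ⧸ H.subgroupOf K) ∈
      (QuotientGroup.mk : K → K ⧸ H.subgroupOf K) '' (b q ⟨i, h⟩ • ((Gs i).subgroupOf K : Set K)))
      ↔ q.out * k ∈ a i • (Gs i : Set G) := by
    conv_lhs => simp only [QuotientGroup.mk_mem_image_smul_iff
      (Subgroup.subgroupOf_mono K (hle i)), mem_leftCoset_iff]
    refine ⟨fun ⟨h, hk⟩ => (mul_mem_leftCoset_iff_of_mul_mem (hb q ⟨i, h⟩)).mpr hk,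
      fun hk => ?_⟩
    have h : q ∈ (QuotientGroup.mk : G → G ⧸ K) '' (a i • (Gs i : Set G)) := ⟨_, hk, hq⟩
    exact ⟨h, (mul_mem_leftCoset_iff_of_mul_mem (hb q ⟨i, h⟩)).mp hk⟩
  have hφ : (Subgroup.quotientEquivProdOfLE hHK).symm (q, k) = ((q.out * k : G) : G ⧸ H) :=
    rfl
  rw [hφ]
  simp only [Subtype.exists, QuotientGroup.mk_mem_image_smul_iff (hle _), exists_prop]
  exact exists_congr fun i => by rw [← key, exists_and_right]

theorem CosetBound.of_normal {H : Subgroup G} (K : Subgroup G) [K.Normal] {Gs : ι → Subgroup G}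
    {a : ι → G} {e : ι → ℕ} {M : ℕ} (hH : H.index ≠ 0) (hHK : H ≤ K) (hle : ∀ i, H ≤ Gs i)
    (houter : CosetBound (⊥ : Subgroup (G ⧸ K)) (fun i => (Gs i).map (QuotientGroup.mk' K))
      (fun i => (a i : G ⧸ K)) (fun i => (Gs i).relIndex K * e i) (H.relIndex K * M))
    (hinner : ∀ (p : ι → Prop) (b : {i // p i} → K),
      CosetBound (H.subgroupOf K) (fun i => (Gs i.1).subgroupOf K) b (fun i => e i.1) M) :
    CosetBound H Gs a e M := by
  have : H.FiniteIndex := ⟨hH⟩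
  have : K.FiniteIndex := Subgroup.finiteIndex_of_le hHK
  let := Fintype.ofFinite (G ⧸ H)
  let := Fintype.ofFinite (G ⧸ K)
  let := Fintype.ofFinite (K ⧸ H.subgroupOf K)
  have hrep (q : G ⧸ K)
      (i : {i // q ∈ (QuotientGroup.mk : G → G ⧸ K) '' (a i • (Gs i : Set G))}) :
      ∃ k : K, q.out * k ∈ a i.1 • (Gs i.1 : Set G) := by
    obtain ⟨i, g, hg, rfl⟩ := i
    exact ⟨⟨_, QuotientGroup.eq.mp (QuotientGroup.out_eq' (g : G ⧸ K))⟩, by simpa using hg⟩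
  choose b hb using hrep
  calc countMultiples (H.index * M) (fun i => (Gs i).index * e i)
      = countMultiples ((⊥ : Subgroup (G ⧸ K)).index * (H.relIndex K * M))
          (fun i => ((Gs i).map (QuotientGroup.mk' K)).index * ((Gs i).relIndex K * e i)) := by
        congr 1
        · rw [Subgroup.index_bot, ← Subgroup.index_eq_card, ← Subgroup.relIndex_mul_index hHK]
          ring
        · funext i
          rw [← mul_assoc, Subgroup.index_map_mk'_mul_relIndex K _ (ne_zero_of_dvd_ne_zero hH
            ((Subgroup.relIndex_dvd_of_le_left _ hHK).trans
              (Subgroup.relIndex_dvd_index_of_le (hle i))))]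
    _ ≤ _ := houter
    _ = ∑ q : G ⧸ K, countMultiples (H.relIndex K * M)
          (fun i : {i // q ∈ (QuotientGroup.mk : G → G ⧸ K) '' (a i • (Gs i : Set G))} =>
            (Gs i.1).relIndex K * e i.1) := by
        rw [countWeightedCosets_bot]
        refine Finset.sum_congr rfl fun q _ => countMultiples_congr fun m => ?_
        simp only [Subtype.exists, QuotientGroup.image_mk_smul]
    _ ≤ ∑ q : G ⧸ K, countWeightedCosets (H.subgroupOf K) (fun i => (Gs i.1).subgroupOf K)
          (b q) (fun i => e i.1) M := Finset.sum_le_sum fun q _ => hinner _ (b q)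
    _ = countWeightedCosets H Gs a e M := sum_countWeightedCosets_subgroupOf hHK hle a e M b hb

theorem CosetBound.of_isSubnormal_or_hasPrimeNormalSeries {H : Subgroup G}
    {Gs : ι → Subgroup G} (a : ι → G) {e : ι → ℕ} {M : ℕ} (hle : ∀ i, H ≤ Gs i)
    (he : ∀ i, e i ∣ M)
    (hcond : (∀ i, (Gs i).IsSubnormal) ∨ HasPrimeNormalSeries H) : CosetBound H Gs a e M := by
  obtain ⟨N, hN⟩ : ∃ N, H.index = N := ⟨_, rfl⟩
  induction N using Nat.strong_induction_on generalizing G ι M with | _ N ih =>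
  rcases eq_or_ne H.index 0 with hH | hH
  · simp [CosetBound, countMultiples, hH]
  by_cases hGs : ∀ i, Gs i = H ∨ Gs i = ⊤
  · exact .of_forall_eq_or_eq_top a hH he hGs
  push Not at hGs
  obtain ⟨i₀, hi₀H, hi₀T⟩ := hGs
  obtain ⟨K, _, hHK, hKT, hcondK, hcondQ⟩ :=
    exists_normal_of_isSubnormal_or_hasPrimeNormalSeries hcond hH hle hi₀H hi₀T
  have : H.FiniteIndex := ⟨hH⟩
  refine CosetBound.of_normal K hH hHK.le hle (ih _ ?_ _ (fun _ => bot_le) (fun i => ?_)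
    (.inl hcondQ) rfl) fun p b => ih _ ?_ b (fun i => Subgroup.subgroupOf_mono K (hle i))
    (fun i => he i) (hcondK.imp_left fun h i => h i) rfl
  · rw [← hN, Subgroup.index_bot, ← Subgroup.index_eq_card]
    exact Subgroup.index_strictAnti hHK
  · exact Nat.mul_dvd_mul (Subgroup.relIndex_dvd_of_le_left K (hle i)) (he i)
  · have : K.FiniteIndex := Subgroup.finiteIndex_of_le hHK.le
    have : H.IsFiniteRelIndex K := Subgroup.isFiniteRelIndex_of_finiteIndex
    rw [← hN, ← Subgroup.relIndex_mul_index hHK.le]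
    exact lt_mul_of_one_lt_right (Nat.pos_of_ne_zero Subgroup.relIndex_ne_zero)
      (Subgroup.one_lt_index_of_ne_top hKT)

end

theorem card_cosets_union_ge_general {G : Type*} [Group G] (H : Subgroup G)
    (k : ℕ) (Gs : Fin k → Subgroup G) (hle : ∀ i, H ≤ Gs i)
    (hcond : (∀ i, IsSubnormal (Gs i)) ∨
      ∃ (n : ℕ) (f : Fin (n + 1) → Subgroup G),
        f 0 = H ∧ f (Fin.last n) = ⊤ ∧
        ∀ i : Fin n, f i.castSucc ≤ f i.succ ∧
          (∀ x ∈ f i.succ, ∀ h ∈ f i.castSucc, x * h * x⁻¹ ∈ f i.castSucc) ∧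
          ((f i.castSucc).relIndex (f i.succ)).Prime)
    (a : Fin k → G) :
    Nat.card {n : ℕ // n < H.index ∧ ∃ i, (Gs i).index ∣ n} ≤
      Nat.card ((QuotientGroup.mk (s := H)) ''
        (⋃ i, (fun g => a i * g) '' (Gs i : Set G)) : Set (G ⧸ H)) := by
  have h := CosetBound.of_isSubnormal_or_hasPrimeNormalSeries a (e := fun _ => 1) hle
    (fun _ => one_dvd 1)
    (hcond.imp_left fun h i => (h i).subgroup_isSubnormal_s7)
  rw [CosetBound, countWeightedCosets_one] at h
  simp only [countMultiples, mul_one] at h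
  exact h

theorem card_cosets_union_ge {G : Type*} [Group G] (H : Subgroup G)
    (hH : H.index ≠ 0) (k : ℕ) (Gs : Fin k → Subgroup G) (hle : ∀ i, H ≤ Gs i)
    (hcond : (∀ i, IsSubnormal (Gs i)) ∨
      ∃ (n : ℕ) (f : Fin (n + 1) → Subgroup G),
        f 0 = H ∧ f (Fin.last n) = ⊤ ∧
        ∀ i : Fin n, f i.castSucc ≤ f i.succ ∧
          (∀ x ∈ f i.succ, ∀ h ∈ f i.castSucc, x * h * x⁻¹ ∈ f i.castSucc) ∧
          ((f i.castSucc).relIndex (f i.succ)).Prime)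
    (a : Fin k → G) :
    Nat.card {n : ℕ // n < H.index ∧ ∃ i, (Gs i).index ∣ n} ≤
      Nat.card ((QuotientGroup.mk (s := H)) ''
        (⋃ i, (fun g => a i * g) '' (Gs i : Set G)) : Set (G ⧸ H)) :=
  card_cosets_union_ge_general H k Gs hle hcond a
end

section
/- Let k be a positive integer and let R be a finite set of positive integers. Then μ(D(kR)) = k · μ(D(R)), where kR = {k·r : r ∈ R}. -/
/-! If every `r ∈ S` divides `N ≠ 0`, then `μ(D(S))` counts the residues `a` mod `N` with
`N ∣ a * r` for some `r ∈ S`: the additive order `N / gcd N a` of `a` in `ZMod N` takes each value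
`m ∣ N` exactly `φ m` times, and it lies in `D(S)` iff it divides some `r ∈ S`. Take `N = ∏ R` for
`R` and `k * N` for `kR`; since `k * N ∣ a * (k * r)` iff `N ∣ a * r`, a condition of period `N`
in `a`, the count below `k * N` is `k` times the count below `N`. -/

open Finset Function Nat

namespace Nat

theorem count_mul_of_periodic_s8 {p : ℕ → Prop} [DecidablePred p] {n : ℕ} (hp : Periodic p n)
    (c : ℕ) : count p (c * n) = c * count p n := by
  induction c with
  | zero => simp
  | succ c ih =>
    have hshift : (fun k => p (c * n + k)) = p := funext fun k => by
      rw [add_comm]; exact hp.nat_mul c k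
    rw [add_mul, one_mul, count_add, ih]
    simp only [hshift]
    ring

theorem div_gcd_dvd_iff_dvd_mul {N : ℕ} (hN : N ≠ 0) (a r : ℕ) :
    N / N.gcd a ∣ r ↔ N ∣ a * r := by
  rw [← ZMod.addOrderOf_coe a hN, addOrderOf_dvd_iff_nsmul_eq_zero, nsmul_eq_mul,
    ← cast_mul, ZMod.natCast_eq_zero_iff, mul_comm]

theorem sum_totient_eq_card_filter_range {N : ℕ} (hN : N ≠ 0) {D : Finset ℕ}
    (hD : ∀ m ∈ D, m ∣ N) : ∑ m ∈ D, φ m = #{a ∈ range N | N / N.gcd a ∈ D} := by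
  rw [card_eq_sum_card_fiberwise (f := fun a => N / N.gcd a) (t := D)
    (s := {a ∈ range N | N / N.gcd a ∈ D}) fun a ha => (mem_filter.mp ha).2]
  refine sum_congr rfl fun m hm => ?_
  have hmN := hD m hm
  have hfiber := totient_div_of_dvd (div_dvd_of_dvd hmN)
  rw [Nat.div_div_self hmN hN] at hfiber
  rw [hfiber, filter_filter]
  refine congr_arg card (filter_congr fun a _ => ?_)
  rw [and_iff_right_of_imp fun h => h ▸ hm]
  conv_rhs => rw [← Nat.div_div_self hmN hN]
  exact (div_eq_iff_eq_of_dvd_dvd hN (gcd_dvd_left N a) (div_dvd_of_dvd hmN)).symm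

theorem sum_totient_biUnion_divisors_eq_count {N : ℕ} (hN : N ≠ 0) {S : Finset ℕ}
    (hS : ∀ r ∈ S, r ∣ N) :
    ∑ m ∈ S.biUnion divisors, φ m = count (fun a => ∃ r ∈ S, N ∣ a * r) N := by
  rw [count_eq_card_filter_range, sum_totient_eq_card_filter_range hN]
  · refine congr_arg card (filter_congr fun a _ => ?_)
    simp only [mem_biUnion, mem_divisors, div_gcd_dvd_iff_dvd_mul hN]
    exact exists_congr fun r => and_congr_right fun hr =>
      and_iff_left (ne_zero_of_dvd_ne_zero hN (hS r hr))
  · intro m hm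
    obtain ⟨r, hr, hmr⟩ := mem_biUnion.mp hm
    exact (dvd_of_mem_divisors hmr).trans (hS r hr)

end Nat

theorem mu_D_smul (k : ℕ) (hk : 0 < k) (R : Finset ℕ) (hR : ∀ r ∈ R, 0 < r) :
    ∑ m ∈ (R.image (fun r => k * r)).biUnion Nat.divisors, Nat.totient m =
      k * ∑ m ∈ R.biUnion Nat.divisors, Nat.totient m := by
  set N := ∏ r ∈ R, r
  have hN : N ≠ 0 := (prod_pos hR).ne'
  have hRN : ∀ r ∈ R, r ∣ N := fun r hr => dvd_prod_of_mem _ hr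
  have hkRN : ∀ s ∈ R.image (k * ·), s ∣ k * N :=
    forall_mem_image.mpr fun r hr => mul_dvd_mul_left k (hRN r hr)
  have hperiodic : Periodic (fun a => ∃ r ∈ R, N ∣ a * r) N := fun a => by
    simp only [add_mul, Nat.dvd_add_left (dvd_mul_right N _)]
  rw [sum_totient_biUnion_divisors_eq_count (mul_ne_zero hk.ne' hN) hkRN,
    sum_totient_biUnion_divisors_eq_count hN hRN, ← count_mul_of_periodic_s8 hperiodic]
  congr 1
  funext a
  simp only [exists_mem_image, mul_left_comm a k, mul_dvd_mul_iff_left hk.ne']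
end

section
/- Let Γ be a family of finite nonempty sets such that whenever S, T ∈ Γ one has S ∩ T ∈ Γ and |S ∩ T| = gcd(|S|, |T|). Then for any finite subfamily Δ of Γ, the cardinality of the union ⋃_{S∈Δ} S equals μ(D({|S| : S ∈ Δ})). -/
lemma divisors_gcd_aux (a b : ℕ) (ha : a ≠ 0) (hb : b ≠ 0) :
    (Nat.gcd a b).divisors = a.divisors ∩ b.divisors := by
  ext d
  simp only [Nat.mem_divisors, Finset.mem_inter]
  constructor
  · rintro ⟨hd, -⟩
    exact ⟨⟨hd.trans (Nat.gcd_dvd_left _ _), ha⟩, ⟨hd.trans (Nat.gcd_dvd_right _ _), hb⟩⟩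
  · rintro ⟨⟨h1, -⟩, ⟨h2, -⟩⟩
    exact ⟨Nat.dvd_gcd h1 h2, Nat.gcd_ne_zero_left ha⟩

lemma aux_card_union {α : Type*} [DecidableEq α] (Γ : Set (Finset α))
    (hne : ∀ S ∈ Γ, S.Nonempty)
    (hint : ∀ S ∈ Γ, ∀ T ∈ Γ, S ∩ T ∈ Γ ∧ (S ∩ T).card = Nat.gcd S.card T.card) :
    ∀ n (Δ : Finset (Finset α)), Δ.card ≤ n → ↑Δ ⊆ Γ →
    (Δ.biUnion id).card =
      ∑ m ∈ (Δ.image Finset.card).biUnion Nat.divisors, Nat.totient m := by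
  intro n
  induction n with
  | zero =>
    intro Δ hcard _
    rw [Finset.card_eq_zero.mp (Nat.le_zero.mp hcard)]
    simp
  | succ n ih =>
    intro Δ hcard hΔ
    rcases Δ.eq_empty_or_nonempty with rfl | ⟨S, hS⟩
    · simp
    have hSΓ : S ∈ Γ := hΔ hS
    set Δ' := Δ.erase S with hΔ'def
    have hΔ'sub : ↑Δ' ⊆ Γ := fun T hT => hΔ (Finset.erase_subset _ _ hT)
    have hΔ'card : Δ'.card ≤ n := by
      have h1 : Δ'.card = Δ.card - 1 := by
        rw [hΔ'def]; exact Finset.card_erase_of_mem hS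
      have h2 : 0 < Δ.card := Finset.card_pos.mpr ⟨S, hS⟩
      omega
    -- the intersected family
    set Δ'' := Δ'.image (fun T => S ∩ T) with hΔ''def
    have hΔ''sub : ↑Δ'' ⊆ Γ := by
      intro X hX
      simp only [hΔ''def, Finset.coe_image, Set.mem_image, Finset.mem_coe] at hX
      obtain ⟨T, hT, rfl⟩ := hX
      exact (hint S hSΓ T (hΔ'sub hT)).1
    have hΔ''card : Δ''.card ≤ n := (Finset.card_image_le).trans hΔ'card
    have ihΔ' := ih Δ' hΔ'card hΔ'sub
    have ihΔ'' := ih Δ'' hΔ''card hΔ''sub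
    have hunion : Δ.biUnion id = S ∪ Δ'.biUnion id := by
      conv_lhs => rw [← Finset.insert_erase hS]
      rw [Finset.biUnion_insert]; rfl
    have hinter : Δ''.biUnion id = S ∩ Δ'.biUnion id := by
      rw [hΔ''def, Finset.image_biUnion, Finset.inter_biUnion]
      rfl
    -- divisor sets
    have hD : (Δ.image Finset.card).biUnion Nat.divisors =
        S.card.divisors ∪ (Δ'.image Finset.card).biUnion Nat.divisors := by
      conv_lhs => rw [← Finset.insert_erase hS]
      rw [Finset.image_insert, Finset.biUnion_insert]
    have hD'' : (Δ''.image Finset.card).biUnion Nat.divisors =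
        S.card.divisors ∩ (Δ'.image Finset.card).biUnion Nat.divisors := by
      rw [hΔ''def, Finset.image_image, Finset.image_biUnion, Finset.inter_biUnion,
        Finset.image_biUnion]
      apply Finset.biUnion_congr rfl
      intro T hT
      rw [Function.comp_apply, (hint S hSΓ T (hΔ'sub hT)).2,
        divisors_gcd_aux _ _ (Finset.card_ne_zero.mpr (hne S hSΓ))
          (Finset.card_ne_zero.mpr (hne T (hΔ'sub hT)))]
    -- put it together
    have key1 := Finset.card_union_add_card_inter S (Δ'.biUnion id)
    have key2 := Finset.sum_union_inter (s₁ := S.card.divisors)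
      (s₂ := (Δ'.image Finset.card).biUnion Nat.divisors) (f := Nat.totient)
    have htot : ∑ x ∈ S.card.divisors, x.totient = S.card := Nat.sum_totient S.card
    rw [hD''] at ihΔ''
    rw [hunion, hD, ← hinter] at *
    omega

theorem card_union_eq_mu_D {α : Type*} [DecidableEq α] (Γ : Set (Finset α))
    (hne : ∀ S ∈ Γ, S.Nonempty)
    (hint : ∀ S ∈ Γ, ∀ T ∈ Γ, S ∩ T ∈ Γ ∧ (S ∩ T).card = Nat.gcd S.card T.card)
    (Δ : Finset (Finset α)) (hΔ : ↑Δ ⊆ Γ) :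
    (Δ.biUnion id).card =
      ∑ m ∈ (Δ.image Finset.card).biUnion Nat.divisors, Nat.totient m := by
  exact aux_card_union Γ hne hint Δ.card Δ le_rfl hΔ
end

section
/- Let G be a group and H a subgroup of G of finite index N = [G : H], and let G_1, …, G_k be subgroups of G each containing H. Then μ(D({[G_i : H] : 1 ≤ i ≤ k})) equals the number of integers n with 0 ≤ n < N such that [G : G_i] divides n for some i ∈ {1, …, k}. -/
/-!
Write `N = [G : H]`, `rᵢ = [Gᵢ : H]` and `dᵢ = [G : Gᵢ]`, so `rᵢ dᵢ = N`. Sorting `n < N`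
by `N / gcd(N, n)`, exactly `φ(m)` of them land on each divisor `m` of `N`; and
`N / gcd(N, n)` divides `rᵢ` iff `dᵢ ∣ n`. So the `n` counted on the right are those with
`N / gcd(N, n)` in `D({rᵢ})`, and there are `μ(D({rᵢ}))` of them.
-/

open Finset

namespace Nat

theorem card_filter_range_div_gcd_eq {N m : ℕ} (hN : N ≠ 0) (hm : m ∣ N) :
    #{n ∈ range N | N / N.gcd n = m} = φ m := by
  have hm' : N / m ∣ N := div_dvd_of_dvd hm
  rw [← Nat.div_div_self hm hN, totient_div_of_dvd hm']
  exact congrArg card (filter_congr fun n _ =>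
    div_eq_iff_eq_of_dvd_dvd hN (gcd_dvd_left N n) hm')

theorem sum_totient_eq_card_filter_range_div_gcd_mem {N : ℕ} (hN : N ≠ 0) {S : Finset ℕ}
    (hS : ∀ m ∈ S, m ∣ N) : ∑ m ∈ S, φ m = #{n ∈ range N | N / N.gcd n ∈ S} := by
  rw [card_eq_sum_card_fiberwise (s := {n ∈ range N | N / N.gcd n ∈ S}) (t := S)
    fun n hn => (mem_filter.mp hn).2]
  refine sum_congr rfl fun m hm => ?_
  rw [filter_filter, ← card_filter_range_div_gcd_eq hN (hS m hm)]
  exact congrArg card (filter_congr fun n _ => (and_iff_right_of_imp fun h => h ▸ hm).symm)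

theorem div_gcd_dvd_iff_dvd {r d n : ℕ} (hrd : r * d ≠ 0) :
    r * d / (r * d).gcd n ∣ r ↔ d ∣ n := by
  set g := (r * d).gcd n
  have hd : 0 < d := Nat.pos_of_ne_zero (right_ne_zero_of_mul hrd)
  have hq : 0 < r * d / g := by
    have hpos : 0 < r * d := Nat.pos_of_ne_zero hrd
    exact Nat.div_pos (gcd_le_left n hpos) (gcd_pos_of_pos_left n hpos)
  calc r * d / g ∣ r ↔ r * d / g * d ∣ r * d := (Nat.mul_dvd_mul_iff_right hd).symm
    _ ↔ r * d / g * d ∣ r * d / g * g := by rw [Nat.div_mul_cancel (gcd_dvd_left _ n)]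
    _ ↔ d ∣ g := Nat.mul_dvd_mul_iff_left hq
    _ ↔ d ∣ n := by rw [dvd_gcd_iff]; exact and_iff_right (dvd_mul_left d r)

theorem sum_totient_biUnion_divisors_eq_card {ι : Type*} [Fintype ι] {N : ℕ} (hN : N ≠ 0)
    (r d : ι → ℕ) (hrd : ∀ i, r i * d i = N) :
    ∑ m ∈ (univ.image r).biUnion divisors, φ m = #{n ∈ range N | ∃ i, d i ∣ n} := by
  have hr : ∀ i, r i ≠ 0 := fun i h => hN (by rw [← hrd i, h, zero_mul])
  have hmem : ∀ m, m ∈ (univ.image r).biUnion divisors ↔ ∃ i, m ∣ r i := by simp [hr]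
  rw [sum_totient_eq_card_filter_range_div_gcd_mem hN fun m hm => ?_]
  · refine congrArg card (filter_congr fun n _ => (hmem _).trans (exists_congr fun i => ?_))
    have h := div_gcd_dvd_iff_dvd (n := n) (hrd i ▸ hN)
    rwa [hrd i] at h
  · obtain ⟨i, hi⟩ := (hmem m).mp hm
    exact hi.trans ⟨d i, (hrd i).symm⟩

end Nat

theorem mu_D_relindex_eq_card {G : Type*} [Group G] (H : Subgroup G)
    (hH : H.index ≠ 0) (k : ℕ) (Gs : Fin k → Subgroup G) (hle : ∀ i, H ≤ Gs i) :
    ∑ m ∈ (Finset.univ.image fun i : Fin k => H.relIndex (Gs i)).biUnion Nat.divisors,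
        Nat.totient m =
      Nat.card {n : ℕ // n < H.index ∧ ∃ i, (Gs i).index ∣ n} := by
  rw [Nat.sum_totient_biUnion_divisors_eq_card hH _ _ fun i => Subgroup.relIndex_mul_index (hle i),
    ← Nat.card_eq_finsetCard]
  exact Nat.card_congr (Equiv.subtypeEquivRight fun n => by simp only [mem_filter, mem_range])
end

section
/- Let G be a group, a_1, …, a_k ∈ G and G_1, …, G_k subgroups of G. Define w(x) = |{1 ≤ i ≤ k : x ∈ a_iG_i}| for x ∈ G, and K = {x ∈ G : w(gx) = w(g) for all g ∈ G}. Then K is a subgroup of G containing ⋂_{i=1}^k G_i, and for every nonempty subset I of {1, …, k}, the union ⋃_{i∈I} a_iG_i is a union of left cosets of K ∩ ⋂_{j∉I} G_j; that is, for every x ∈ ⋃_{i∈I} a_iG_i one has x·(K ∩ ⋂_{j∉I} G_j) ⊆ ⋃_{i∈I} a_iG_i, where ⋂_{j∈∅} G_j is understood to be G. -/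
theorem covering_multiplicity_stabilizer {G : Type*} [Group G]
    (k : ℕ) (a : Fin k → G) (Gs : Fin k → Subgroup G) :
    ∃ K : Subgroup G,
      (K : Set G) = {x : G | ∀ g : G,
          Nat.card {i : Fin k // (a i)⁻¹ * (g * x) ∈ Gs i} =
            Nat.card {i : Fin k // (a i)⁻¹ * g ∈ Gs i}} ∧
      (∀ x : G, (∀ i, x ∈ Gs i) → x ∈ K) ∧
      ∀ I : Finset (Fin k), I.Nonempty →
        ∀ x ∈ ⋃ i ∈ I, (fun g => a i * g) '' (Gs i : Set G),
          ∀ y ∈ K, (∀ j ∉ I, y ∈ Gs j) →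
            x * y ∈ ⋃ i ∈ I, (fun g => a i * g) '' (Gs i : Set G) := by
  classical
  set w : G → ℕ := fun g => Nat.card {i : Fin k // (a i)⁻¹ * g ∈ Gs i} with hw
  refine ⟨{ carrier := {x : G | ∀ g : G, w (g * x) = w g}
            mul_mem' := ?_
            one_mem' := ?_
            inv_mem' := ?_ }, rfl, ?_, ?_⟩
  · intro p q hp hq g
    rw [← mul_assoc]
    rw [hq (g * p), hp g]
  · intro g; rw [mul_one]
  · intro p hp g
    have := hp (g * p⁻¹)
    rwa [mul_assoc, inv_mul_cancel, mul_one, eq_comm] at this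
  · intro x hx g
    exact Nat.card_congr (Equiv.subtypeEquivRight fun i => by
      rw [← mul_assoc]
      exact (Gs i).mul_mem_cancel_right (hx i))
  · intro I hI x hx y hy hyGs
    by_contra h
    -- membership translation
    have mem_iff : ∀ z : G, (z ∈ ⋃ i ∈ I, (fun g => a i * g) '' (Gs i : Set G)) ↔
        ∃ i ∈ I, (a i)⁻¹ * z ∈ Gs i := by
      intro z
      simp only [Set.mem_iUnion, Set.mem_image, SetLike.mem_coe]
      constructor
      · rintro ⟨i, hi, g, hg, rfl⟩
        exact ⟨i, hi, by rwa [← mul_assoc, inv_mul_cancel, one_mul]⟩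
      · rintro ⟨i, hi, hgi⟩
        exact ⟨i, hi, (a i)⁻¹ * z, hgi, by rw [← mul_assoc, mul_inv_cancel, one_mul]⟩
    obtain ⟨i0, hi0I, hi0⟩ := (mem_iff x).1 hx
    have hnot : ∀ i ∈ I, ¬ ((a i)⁻¹ * (x * y) ∈ Gs i) := by
      intro i hi hmem
      exact h ((mem_iff (x * y)).2 ⟨i, hi, hmem⟩)
    have hout : ∀ i ∉ I, ((a i)⁻¹ * (x * y) ∈ Gs i ↔ (a i)⁻¹ * x ∈ Gs i) := by
      intro i hi
      rw [← mul_assoc]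
      exact (Gs i).mul_mem_cancel_right (hyGs i hi)
    have hcard : ∀ z : G, w z = (Finset.univ.filter fun i => (a i)⁻¹ * z ∈ Gs i).card := by
      intro z
      rw [hw]
      simp [Nat.card_eq_fintype_card, Fintype.card_subtype]
    have hsub : (Finset.univ.filter fun i => (a i)⁻¹ * (x * y) ∈ Gs i) ⊂
        (Finset.univ.filter fun i => (a i)⁻¹ * x ∈ Gs i) := by
      constructor
      · intro i hif
        simp only [Finset.mem_filter, Finset.mem_univ, true_and] at hif ⊢
        by_cases hiI : i ∈ I
        · exact absurd hif (hnot i hiI)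
        · exact (hout i hiI).1 hif
      · intro hcontra
        have h1 : i0 ∈ (Finset.univ.filter fun i => (a i)⁻¹ * x ∈ Gs i) := by
          simp [hi0]
        have h2 := hcontra h1
        simp only [Finset.mem_filter, Finset.mem_univ, true_and] at h2
        exact hnot i0 hi0I h2
    have := hy x
    rw [hcard (x * y), hcard x] at this
    exact absurd this (Nat.ne_of_lt (Finset.card_lt_card hsub))
end
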